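/- arXiv:math/0304009 — 3 statements merged into one kernel-verified Lean document; each statement's English description precedes it below -/
import Mathlib

section
/- (Powers–Størmer inequality, matrix version) If a and b are positive semidefinite n×n complex matrices, then ‖a − b‖_HS² ≤ ‖a² − b²‖₁, where ‖x‖_HS² = Tr(x*x) is the Hilbert–Schmidt norm and ‖x‖₁ = Tr(|x|) is the trace norm. -/
/-!
Put `c = a - b` and `s = sign c`, so that `s c = c s = |c|` and `-1 ≤ s ≤ 1`. Since
`a² - b² = c a + b c`, cyclicity of the trace gives `Tr(s (a² - b²)) = Tr(|c| (a + b))`, and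
`Tr(s x) ≤ Tr |x|` for self-adjoint `x` because `|x| - s x = (1 - s) x⁺ + (1 + s) x⁻` is a sum of
products of positive matrices. Finally `|c| (a + b) = c² + 2 (c⁺ b + c⁻ a)`, and products of
positive matrices have nonnegative trace.
-/

open Matrix
open scoped ComplexOrder

/-- The square root of a positive semidefinite matrix (Mathlib's former `Matrix.PosSemidef.sqrt`). -/
noncomputable def Matrix.PosSemidef.sqrt {n : Type*} [Fintype n] [DecidableEq n]
    {A : Matrix n n ℂ} (hA : A.PosSemidef) : Matrix n n ℂ :=
  (hA.1.eigenvectorUnitary : Matrix n n ℂ) *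
    diagonal ((↑) ∘ (Real.sqrt) ∘ hA.1.eigenvalues) * (star (hA.1.eigenvectorUnitary : Matrix n n ℂ))

/-- The Hilbert–Schmidt norm `‖x‖_HS = √(Tr(x* x))` of a complex matrix. -/
noncomputable def hsNorm {n : ℕ} (x : Matrix (Fin n) (Fin n) ℂ) : ℝ :=
  Real.sqrt ((xᴴ * x).trace.re)

/-- The trace norm `‖x‖₁ = Tr(|x|) = Tr(√(x* x))` of a complex matrix. -/
noncomputable def traceNorm {n : ℕ} (x : Matrix (Fin n) (Fin n) ℂ) : ℝ :=
  ((Matrix.posSemidef_conjTranspose_mul_self x).sqrt).trace.re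

open scoped MatrixOrder

namespace CFC

variable {A : Type*} [Ring A] [StarRing A] [TopologicalSpace A] [Algebra ℝ A]
  [ContinuousFunctionalCalculus ℝ A IsSelfAdjoint]

noncomputable def sign (a : A) : A := cfc (fun x : ℝ ↦ (SignType.sign x : ℝ)) a

variable [PartialOrder A] [StarOrderedRing A]

lemma sign_le_one (a : A) : sign a ≤ 1 :=
  cfc_le_one _ a fun x _ ↦ by cases SignType.sign x <;> simp

lemma neg_one_le_sign {a : A} (hs : ContinuousOn (fun x : ℝ ↦ (SignType.sign x : ℝ)) (spectrum ℝ a))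
    (ha : IsSelfAdjoint a) : -1 ≤ sign a := by
  simpa [sign] using
    algebraMap_le_cfc (R := ℝ) _ (-1) a (fun x _ ↦ by cases SignType.sign x <;> simp) hs

variable [NonnegSpectrumClass ℝ A] [IsTopologicalRing A] [T2Space A]

lemma sign_mul_self {a : A} (hs : ContinuousOn (fun x : ℝ ↦ (SignType.sign x : ℝ)) (spectrum ℝ a))
    (ha : IsSelfAdjoint a) : sign a * a = abs a := by
  conv_lhs => rhs; rw [← cfc_id' ℝ a]
  rw [sign, ← cfc_mul .., abs_eq_cfc_norm a]
  exact cfc_congr fun x _ ↦ _root_.sign_mul_self x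

lemma self_mul_sign {a : A} (hs : ContinuousOn (fun x : ℝ ↦ (SignType.sign x : ℝ)) (spectrum ℝ a))
    (ha : IsSelfAdjoint a) : a * sign a = abs a := by
  conv_lhs => lhs; rw [← cfc_id' ℝ a]
  rw [sign, ← cfc_mul .., abs_eq_cfc_norm a]
  exact cfc_congr fun x _ ↦ _root_.self_mul_sign x

lemma abs_sub_mul_add (a b : A) (hab : IsSelfAdjoint (a - b)) :
    abs (a - b) * (a + b) = (a - b) * (a - b) + 2 • ((a - b)⁺ * b + (a - b)⁻ * a) := by
  have ha : a = b + ((a - b)⁺ - (a - b)⁻) := by rw [posPart_sub_negPart _ hab]; abel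
  rw [← CFC.posPart_add_negPart _ hab]
  generalize (a - b)⁺ = p, (a - b)⁻ = q at ha ⊢
  subst ha
  noncomm_ring

end CFC

namespace Matrix

lemma trace_mul_sq_sub_sq {n R : Type*} [Fintype n] [CommRing R] {u a b m : Matrix n n R}
    (hum : u * (a - b) = m) (hmu : (a - b) * u = m) :
    (u * (a * a - b * b)).trace = (m * (a + b)).trace := by
  have : a * a - b * b = (a - b) * a + b * (a - b) := by noncomm_ring
  rw [this, mul_add, trace_add, ← mul_assoc, hum, trace_mul_comm u, mul_assoc, hmu,
    trace_mul_comm b, ← trace_add, ← mul_add]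

variable {𝕜 n : Type*} [RCLike 𝕜] [Fintype n] [DecidableEq n]

lemma trace_mul_nonneg {x y : Matrix n n 𝕜} (hx : 0 ≤ x) (hy : 0 ≤ y) : 0 ≤ (x * y).trace := by
  obtain ⟨s, rfl⟩ := CStarAlgebra.nonneg_iff_eq_star_mul_self.mp hx
  rw [mul_assoc, trace_mul_comm]
  exact (nonneg_iff_posSemidef.mp (star_right_conjugate_nonneg hy s)).trace_nonneg

lemma trace_mul_le_trace_cfcAbs {u d : Matrix n n 𝕜} (hu : -1 ≤ u) (hu' : u ≤ 1)
    (hd : IsSelfAdjoint d) : (u * d).trace ≤ (CFC.abs d).trace := by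
  have : CFC.abs d - u * d = (1 - u) * d⁺ + (1 + u) * d⁻ := by
    conv_lhs => arg 2; rw [← CFC.posPart_sub_negPart d hd]
    rw [← CFC.posPart_add_negPart d hd]
    noncomm_ring
  rw [← sub_nonneg, ← trace_sub, this, trace_add]
  exact add_nonneg (trace_mul_nonneg (sub_nonneg.mpr hu') (CFC.posPart_nonneg d))
    (trace_mul_nonneg (neg_le_iff_add_nonneg'.mp hu) (CFC.negPart_nonneg d))

lemma trace_sub_mul_sub_le_trace_cfcAbs_mul_add {a b : Matrix n n 𝕜} (ha : 0 ≤ a) (hb : 0 ≤ b) :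
    ((a - b) * (a - b)).trace ≤ (CFC.abs (a - b) * (a + b)).trace := by
  rw [CFC.abs_sub_mul_add a b (ha.isSelfAdjoint.sub hb.isSelfAdjoint), trace_add, trace_smul,
    le_add_iff_nonneg_right, trace_add]
  exact smul_nonneg zero_le_two (add_nonneg (trace_mul_nonneg (CFC.posPart_nonneg _) hb)
    (trace_mul_nonneg (CFC.negPart_nonneg _) ha))

theorem trace_sub_mul_sub_le_trace_cfcAbs {a b : Matrix n n 𝕜} (ha : 0 ≤ a) (hb : 0 ≤ b) :
    ((a - b) * (a - b)).trace ≤ (CFC.abs (a * a - b * b)).trace := by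
  have hc : IsSelfAdjoint (a - b) := ha.isSelfAdjoint.sub hb.isSelfAdjoint
  have hs := (a - b).finite_real_spectrum.continuousOn (fun x : ℝ ↦ (SignType.sign x : ℝ))
  calc ((a - b) * (a - b)).trace
      ≤ (CFC.abs (a - b) * (a + b)).trace := trace_sub_mul_sub_le_trace_cfcAbs_mul_add ha hb
    _ = (CFC.sign (a - b) * (a * a - b * b)).trace :=
      (trace_mul_sq_sub_sq (CFC.sign_mul_self hs hc) (CFC.self_mul_sign hs hc)).symm
    _ ≤ (CFC.abs (a * a - b * b)).trace :=
      trace_mul_le_trace_cfcAbs (CFC.neg_one_le_sign hs hc) (CFC.sign_le_one _)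
        (by simpa only [sq] using (ha.isSelfAdjoint.pow 2).sub (hb.isSelfAdjoint.pow 2))

end Matrix

namespace Matrix.PosSemidef

variable {n : Type*} [Fintype n] [DecidableEq n]

lemma sqrt_eq_cfcSqrt {A : Matrix n n ℂ} (hA : A.PosSemidef) : hA.sqrt = CFC.sqrt A := by
  rw [CFC.sqrt_eq_cfc, cfc_nnreal_eq_real _ A (nonneg_iff_posSemidef.mpr hA), hA.1.cfc_eq,
    IsHermitian.cfc, Unitary.conjStarAlgAut_apply, Matrix.PosSemidef.sqrt]
  congr 3
  funext i
  simp only [Function.comp_apply, Real.coe_sqrt, Real.coe_toNNReal',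
    max_eq_left (hA.eigenvalues_nonneg i)]
  rfl

end Matrix.PosSemidef

lemma hsNorm_sq {n : ℕ} (x : Matrix (Fin n) (Fin n) ℂ) : hsNorm x ^ 2 = (xᴴ * x).trace.re :=
  Real.sq_sqrt (Complex.nonneg_iff.mp (posSemidef_conjTranspose_mul_self x).trace_nonneg).1

lemma traceNorm_eq_re_trace_cfcAbs {n : ℕ} (x : Matrix (Fin n) (Fin n) ℂ) :
    traceNorm x = (CFC.abs x).trace.re := by
  rw [traceNorm, PosSemidef.sqrt_eq_cfcSqrt]
  rfl

/-- Powers–Størmer inequality: `‖a − b‖_HS² ≤ ‖a² − b²‖₁` for positive semidefinite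
matrices `a`, `b`. -/
theorem powers_stormer {n : ℕ} (a b : Matrix (Fin n) (Fin n) ℂ)
    (ha : a.PosSemidef) (hb : b.PosSemidef) :
    hsNorm (a - b) ^ 2 ≤ traceNorm (a * a - b * b) := by
  rw [hsNorm_sq, (ha.1.sub hb.1).eq, traceNorm_eq_re_trace_cfcAbs]
  exact (Complex.le_def.mp (trace_sub_mul_sub_le_trace_cfcAbs
    (nonneg_iff_posSemidef.mpr ha) (nonneg_iff_posSemidef.mpr hb))).1
end

section
/- Let P be a projection in M_n(ℂ) and a ∈ M_n(ℂ). Then the operator norm of the commutator satisfies ‖Pa − aP‖ = max{ ‖Paa*P − PaPa*P‖^{1/2}, ‖Pa*aP − Pa*PaP‖^{1/2} }. -/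
/-!
Write `q = 1 - P`. Then `Pa - aP = Paq - qaP`, and the two summands have orthogonal ranges
(inside `range P` and `range q`) and vanish on complementary subspaces (`range P` and
`range q`), so Pythagoras on both sides gives `‖Pa - aP‖ ≤ max ‖Paq‖ ‖qaP‖`; the reverse
inequality holds because `Paq = P(Pa - aP)q` and `‖P‖, ‖q‖ ≤ 1`. Finally
`(Paq)(Paq)* = Paa*P - PaPa*P` and `(qaP)*(qaP) = Pa*aP - Pa*PaP`, so the C*-identity turns
the two norms into the square roots.
-/

open Matrix

/-- The (L²) operator norm of a complex matrix, i.e. the norm of the operator it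
induces on Euclidean space. -/
noncomputable def opNorm {n : ℕ} (x : Matrix (Fin n) (Fin n) ℂ) : ℝ :=
  ‖Matrix.toEuclideanCLM (𝕜 := ℂ) (n := Fin n) x‖

namespace IsStarProjection

section StarRing

variable {R : Type*} [Ring R] [StarRing R] {p : R}

lemma mul_commutator_mul_one_sub (hp : IsStarProjection p) (a : R) :
    p * (p * a - a * p) * (1 - p) = p * a * (1 - p) := by
  simp only [mul_sub, sub_mul, mul_one, ← mul_assoc, hp.isIdempotentElem.eq,
    hp.isIdempotentElem.mul_mul_self]
  abel

lemma one_sub_mul_commutator_mul (hp : IsStarProjection p) (a : R) :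
    (1 - p) * (p * a - a * p) * p = -((1 - p) * a * p) := by
  simp only [mul_sub, sub_mul, one_mul, ← mul_assoc, hp.isIdempotentElem.eq,
    hp.isIdempotentElem.mul_mul_self]
  abel

lemma star_mul_mul_one_sub_mul_one_sub_mul_mul (hp : IsStarProjection p) (a : R) :
    star (p * a * (1 - p)) * ((1 - p) * a * p) = 0 := by
  simp only [star_mul, star_sub, hp.isSelfAdjoint.star_eq, mul_sub, sub_mul, mul_one, one_mul,
    ← mul_assoc, hp.isIdempotentElem.mul_mul_self]
  abel

lemma mul_mul_one_sub_mul_star (hp : IsStarProjection p) (a : R) :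
    p * a * (1 - p) * star (p * a * (1 - p)) = p * a * star a * p - p * a * p * star a * p := by
  simp only [star_mul, star_sub, hp.isSelfAdjoint.star_eq, mul_sub, sub_mul, mul_one,
    ← mul_assoc, hp.isIdempotentElem.mul_mul_self]
  abel

lemma star_one_sub_mul_mul_mul (hp : IsStarProjection p) (a : R) :
    star ((1 - p) * a * p) * ((1 - p) * a * p) = p * star a * a * p - p * star a * p * a * p := by
  simp only [star_mul, star_sub, hp.isSelfAdjoint.star_eq, mul_sub, sub_mul, one_mul,
    ← mul_assoc, hp.isIdempotentElem.mul_mul_self]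
  abel

end StarRing

lemma norm_mul_mul_le {R : Type*} [NormedRing R] [StarRing R] [CStarRing R] {p q : R}
    (hp : IsStarProjection p) (hq : IsStarProjection q) (x : R) : ‖p * x * q‖ ≤ ‖x‖ :=
  calc ‖p * x * q‖ ≤ ‖p‖ * ‖x‖ * ‖q‖ := norm_mul₃_le
    _ ≤ 1 * ‖x‖ * 1 := by gcongr; exacts [hp.norm_le, hq.norm_le]
    _ = ‖x‖ := by ring

end IsStarProjection

section InnerProductSpace

variable {𝕜 E : Type*} [RCLike 𝕜] [NormedAddCommGroup E] [InnerProductSpace 𝕜 E]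
  [CompleteSpace E] {p : E →L[𝕜] E}

lemma IsStarProjection.norm_sq_add_norm_one_sub_sq (hp : IsStarProjection p) (x : E) :
    ‖p x‖ ^ 2 + ‖(1 - p) x‖ ^ 2 = ‖x‖ ^ 2 := by
  obtain ⟨K, _, rfl⟩ := isStarProjection_iff_eq_starProjection.mp hp
  rw [← K.starProjection_orthogonal', ← K.norm_sq_eq_add_norm_sq_starProjection]

lemma ContinuousLinearMap.norm_add_le_max_of_orthogonal {u v : E →L[𝕜] E}
    (hp : IsStarProjection p) (huv : star u * v = 0) (hup : u * p = 0) (hvp : v * (1 - p) = 0) :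
    ‖u + v‖ ≤ max ‖u‖ ‖v‖ := by
  set M := max ‖u‖ ‖v‖
  refine opNorm_le_bound _ (le_max_of_le_left (norm_nonneg u)) fun x => ?_
  have hu : u * (1 - p) = u := by rw [mul_sub, mul_one, hup, sub_zero]
  have hv : v * p = v := by rw [mul_one_sub, sub_eq_zero] at hvp; exact hvp.symm
  have hux : ‖u x‖ ≤ M * ‖(1 - p) x‖ :=
    calc ‖u x‖ = ‖u ((1 - p) x)‖ := by rw [← mul_apply_eq_comp, hu]
      _ ≤ ‖u‖ * ‖(1 - p) x‖ := le_opNorm u _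
      _ ≤ M * ‖(1 - p) x‖ := by gcongr; exact le_max_left _ _
  have hvx : ‖v x‖ ≤ M * ‖p x‖ :=
    calc ‖v x‖ = ‖v (p x)‖ := by rw [← mul_apply_eq_comp, hv]
      _ ≤ ‖v‖ * ‖p x‖ := le_opNorm v _
      _ ≤ M * ‖p x‖ := by gcongr; exact le_max_right _ _
  have horth : inner 𝕜 (u x) (v x) = 0 := by
    rw [← adjoint_inner_right, ← star_eq_adjoint, ← mul_apply_eq_comp, huv, _root_.zero_apply,
      inner_zero_right]
  have hsq : ‖(u + v) x‖ ^ 2 ≤ (M * ‖x‖) ^ 2 :=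
    calc ‖(u + v) x‖ ^ 2 = ‖u x‖ ^ 2 + ‖v x‖ ^ 2 := by
          rw [_root_.add_apply, sq, sq, sq,
            norm_add_sq_eq_norm_sq_add_norm_sq_of_inner_eq_zero _ _ horth]
      _ ≤ (M * ‖(1 - p) x‖) ^ 2 + (M * ‖p x‖) ^ 2 := by gcongr
      _ = (M * ‖x‖) ^ 2 := by rw [mul_pow M ‖x‖, ← hp.norm_sq_add_norm_one_sub_sq x]; ring
  exact le_of_sq_le_sq hsq (by positivity)

lemma ContinuousLinearMap.norm_commutator_eq_max (hp : IsStarProjection p) (a : E →L[𝕜] E) :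
    ‖p * a - a * p‖ = max ‖p * a * (1 - p)‖ ‖(1 - p) * a * p‖ := by
  refine le_antisymm ?_ (max_le ?_ ?_)
  · have hsplit : p * a - a * p = p * a * (1 - p) + -((1 - p) * a * p) := by noncomm_ring
    rw [hsplit, ← norm_neg ((1 - p) * a * p)]
    refine norm_add_le_max_of_orthogonal hp ?_ ?_ ?_
    · rw [mul_neg, hp.star_mul_mul_one_sub_mul_one_sub_mul_mul, neg_zero]
    · rw [mul_assoc, hp.one_sub_mul_self, mul_zero]
    · rw [neg_mul, mul_assoc, hp.mul_one_sub_self, mul_zero, neg_zero]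
  · rw [← hp.mul_commutator_mul_one_sub]
    exact hp.norm_mul_mul_le hp.one_sub _
  · rw [← norm_neg, ← hp.one_sub_mul_commutator_mul]
    exact hp.one_sub.norm_mul_mul_le hp _

end InnerProductSpace

/-- For a projection `P` and a matrix `a`, the operator norm of the commutator satisfies
`‖Pa − aP‖ = max { ‖Paa*P − PaPa*P‖^{1/2}, ‖Pa*aP − Pa*PaP‖^{1/2} }`. -/
theorem commutator_op_norm {n : ℕ} (P a : Matrix (Fin n) (Fin n) ℂ)
    (hP : Pᴴ = P) (hP2 : P * P = P) :
    opNorm (P * a - a * P)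
      = max (Real.sqrt (opNorm (P * a * aᴴ * P - P * a * P * aᴴ * P)))
          (Real.sqrt (opNorm (P * aᴴ * a * P - P * aᴴ * P * a * P))) := by
  have hp : IsStarProjection (toEuclideanCLM (𝕜 := ℂ) (n := Fin n) P) :=
    IsStarProjection.map ⟨hP2, hP⟩ _
  simp only [opNorm, map_sub, map_mul, ← star_eq_conjTranspose, map_star]
  rw [← hp.mul_mul_one_sub_mul_star, ← hp.star_one_sub_mul_mul_mul,
    CStarRing.norm_self_mul_star, CStarRing.norm_star_mul_self, Real.sqrt_mul_self (norm_nonneg _),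
    Real.sqrt_mul_self (norm_nonneg _), ContinuousLinearMap.norm_commutator_eq_max hp]
end

section
/- For positive real numbers p₁,…,p_k and q = Σ p_i, and any complex numbers (T_{ij}), the following estimate holds: Σ_{i,j} (1/q)|T_{ij}|² ((p_i p_j)^{1/2} − min{p_i, p_j}) ≤ (Σ_{i,j} (1/q)|T_{ij}|² p_i)^{1/2} · (Σ_{i,j} (1/q)|T_{ij}|² (p_i^{1/2} − p_j^{1/2})²)^{1/2}. -/
open scoped BigOperators

/-! Pointwise, `√(ab) − min a b ≤ √a · |√a − √b|`; weighting by `|T_{ij}|²/q` and summing, the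
Cauchy–Schwarz inequality for the sum of `√(w a) · √(w (√a − √b)²)` gives the estimate. -/

namespace Real

lemma sqrt_mul_sub_min_le {a b : ℝ} (ha : 0 ≤ a) (hb : 0 ≤ b) :
    √(a * b) - min a b ≤ √a * |√a - √b| := by
  rw [sqrt_mul ha]
  rcases le_total a b with hab | hba
  · have hsqrt : √a ≤ √b := sqrt_le_sqrt hab
    rw [min_eq_left hab, abs_of_nonpos (sub_nonpos_of_le hsqrt)]
    nlinarith [sq_sqrt ha, sqrt_nonneg a]
  · have hsqrt : √b ≤ √a := sqrt_le_sqrt hba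
    rw [min_eq_right hba, abs_of_nonneg (sub_nonneg_of_le hsqrt)]
    nlinarith [sq_sqrt hb, sqrt_nonneg b]

lemma sqrt_mul_mul_sqrt_mul_sq {w a : ℝ} (hw : 0 ≤ w) (b : ℝ) :
    √(w * a) * √(w * b ^ 2) = w * (√a * |b|) := by
  rw [sqrt_mul hw, sqrt_mul hw, sqrt_sq_eq_abs, mul_mul_mul_comm, mul_self_sqrt hw]

lemma sum_mul_sqrt_mul_sub_min_le {ι : Type*} (s : Finset ι) {w a b : ι → ℝ}
    (hw : ∀ i, 0 ≤ w i) (ha : ∀ i, 0 ≤ a i) (hb : ∀ i, 0 ≤ b i) :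
    ∑ i ∈ s, w i * (√(a i * b i) - min (a i) (b i))
      ≤ √(∑ i ∈ s, w i * a i) * √(∑ i ∈ s, w i * (√(a i) - √(b i)) ^ 2) :=
  calc ∑ i ∈ s, w i * (√(a i * b i) - min (a i) (b i))
      ≤ ∑ i ∈ s, √(w i * a i) * √(w i * (√(a i) - √(b i)) ^ 2) :=
        Finset.sum_le_sum fun i _ => by
          rw [sqrt_mul_mul_sqrt_mul_sq (hw i)]
          exact mul_le_mul_of_nonneg_left (sqrt_mul_sub_min_le (ha i) (hb i)) (hw i)
    _ ≤ √(∑ i ∈ s, w i * a i) * √(∑ i ∈ s, w i * (√(a i) - √(b i)) ^ 2) :=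
        sum_sqrt_mul_sqrt_le s (fun i => mul_nonneg (hw i) (ha i))
          (fun i => mul_nonneg (hw i) (sq_nonneg _))

end Real

/-- The key scalar Cauchy–Schwarz estimate from Ozawa's proof of the characterization
of amenable traces: for positive reals `p₁,…,p_k` with `q = Σ p_i` and complex numbers
`T_{ij}`,
`Σ_{i,j} (1/q)|T_{ij}|²((p_i p_j)^{1/2} − min{p_i,p_j})
  ≤ (Σ_{i,j} (1/q)|T_{ij}|² p_i)^{1/2} · (Σ_{i,j} (1/q)|T_{ij}|²(p_i^{1/2} − p_j^{1/2})²)^{1/2}`. -/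
theorem ozawa_scalar_estimate {k : ℕ} (p : Fin k → ℝ) (hp : ∀ i, 0 < p i)
    (q : ℝ) (hq : q = ∑ i, p i) (T : Fin k → Fin k → ℂ) :
    ∑ i, ∑ j, (1 / q) * ‖T i j‖ ^ 2
        * (Real.sqrt (p i * p j) - min (p i) (p j))
      ≤ Real.sqrt (∑ i, ∑ j, (1 / q) * ‖T i j‖ ^ 2 * p i)
        * Real.sqrt (∑ i, ∑ j, (1 / q) * ‖T i j‖ ^ 2
            * (Real.sqrt (p i) - Real.sqrt (p j)) ^ 2) := by
  have hq_nonneg : 0 ≤ q := hq ▸ Finset.sum_nonneg fun i _ => (hp i).le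
  simpa only [Fintype.sum_prod_type] using
    Real.sum_mul_sqrt_mul_sub_min_le Finset.univ
      (w := fun x : Fin k × Fin k => 1 / q * ‖T x.1 x.2‖ ^ 2) (a := fun x => p x.1)
      (b := fun x => p x.2) (fun _ => by positivity) (fun x => (hp x.1).le) (fun x => (hp x.2).le)
end
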